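/- Decomposition of the partial partition function: for any partition X of the root set R, Z_X(G; q, v) = Σ_{Y ⪯ X} F_Y(G; q, v), where the sum runs over partitions Y of R refining X, F_Y(G;q,v) = Σ_{S: π(S)=Y} v^{|S|} q^{p(S)-|Y|}, and Z_X(G;q,v) = Σ_{σ fixing colors according to X} Π_{{i,j}∈E}(1 + v δ(σ_i,σ_j)). -/
import Mathlib


/-!
STATEMENT 8: decomposition of the partial partition function: for any partition
`X` of the root set `R`,  `Z_X(G;q,v) = Σ_{Y ⪯ X} F_Y(G;q,v)`, where
`F_Y(G;q,v) = Σ_{S : π(S) = Y} v^{|S|} q^{p(S)-|Y|}` and `Z_X` is obtained by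
fixing a coloring `c` of the roots inducing the partition `X` and summing the
product `Π (1 + v δ)` over all colorings agreeing with `c` on `R`.
Partitions of `R` are encoded as setoids on `R`; `Y ≤ X` is refinement.
-/

structure Multigraph where
  V : Type
  E : Type
  [fintypeV : Fintype V]
  [fintypeE : Fintype E]
  [decV : DecidableEq V]
  [decE : DecidableEq E]
  ends : E → V × V

attribute [instance] Multigraph.fintypeV Multigraph.fintypeE Multigraph.decV
  Multigraph.decE

namespace Multigraph

variable (G : Multigraph)

def adj (S : Set G.E) (a b : G.V) : Prop :=
  ∃ e ∈ S, G.ends e = (a, b) ∨ G.ends e = (b, a)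

/-- the connectivity partition of the vertices determined by the edge set `S` -/
def connSetoid (S : Set G.E) : Setoid G.V := Relation.EqvGen.setoid (G.adj S)

/-- `p S`: the number of connected components of the spanning subgraph `(V,S)` -/
noncomputable def p (S : Set G.E) : ℕ := Nat.card (Quotient (G.connSetoid S))

/-- `π(S)`: the partition of the root set `R` induced by connectivity in `(V,S)` -/
def rootPartition (R : Finset G.V) (S : Set G.E) : Setoid {a : G.V // a ∈ R} :=
  Setoid.comap Subtype.val (G.connSetoid S)

/-- number of blocks of a partition -/
noncomputable def nBlocks {α : Type} (Y : Setoid α) : ℕ := Nat.card (Quotient Y)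

/-- `F_Y(G;q,v) = Σ_{S : π(S)=Y} v^{|S|} q^{p(S)-|Y|}` -/
noncomputable def FF (R : Finset G.V) (A : Type) [CommRing A] (q : ℕ) (v : A)
    (Y : Setoid {a : G.V // a ∈ R}) : A := by
  classical
  exact ∑ S : Finset G.E,
    if G.rootPartition R (S : Set G.E) = Y then
      v ^ S.card * (q : A) ^ (G.p (S : Set G.E) - nBlocks Y) else 0

end Multigraph

open Multigraph in
open scoped Classical in
lemma count_lemma (G : Multigraph) (R : Finset G.V) (q : ℕ)
    (X : Setoid {a : G.V // a ∈ R}) (c : {a : G.V // a ∈ R} → Fin q)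
    (hc : ∀ i j, c i = c j ↔ X i j) (S : Finset G.E) :
    Nat.card {σ : {σ : G.V → Fin q // ∀ i : {a : G.V // a ∈ R}, σ i.val = c i} //
        ∀ a b : G.V, (G.connSetoid (S : Set G.E)) a b → σ.val a = σ.val b} =
      if G.rootPartition R (S : Set G.E) ≤ X then
        q ^ (G.p (S : Set G.E) - nBlocks (G.rootPartition R (S : Set G.E)))
      else 0 := by
  classical
  set s := G.connSetoid (S : Set G.E) with hs
  have key : ∀ (i j : {a : G.V // a ∈ R}),
      (Quotient.mk s i.val = Quotient.mk s j.val) ↔ G.rootPartition R (S : Set G.E) i j := by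
    intro i j
    constructor
    · intro h
      have h2 : s i.val j.val := Quotient.exact h
      exact h2
    · intro h
      have h2 : s i.val j.val := h
      exact Quotient.sound h2
  -- first equivalence
  let e1 : {σ : {σ : G.V → Fin q // ∀ i : {a : G.V // a ∈ R}, σ i.val = c i} //
        ∀ a b : G.V, s a b → σ.val a = σ.val b} ≃
      {f : Quotient s → Fin q // ∀ i : {a : G.V // a ∈ R}, f (Quotient.mk s i.val) = c i} :=
    { toFun := fun σ => ⟨Quotient.lift σ.val.val σ.prop, fun i => σ.val.prop i⟩
      invFun := fun f => ⟨⟨fun x => f.val (Quotient.mk s x), fun i => f.prop i⟩,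
        fun a b hab => congrArg f.val (Quotient.sound hab)⟩
      left_inv := fun σ => rfl
      right_inv := fun f => by
        apply Subtype.ext; funext x
        induction x using Quotient.ind
        rfl }
  rw [Nat.card_congr e1]
  by_cases h : G.rootPartition R (S : Set G.E) ≤ X
  · rw [if_pos h]
    set T : Set (Quotient s) := Set.range (fun i : {a : G.V // a ∈ R} => Quotient.mk s i.val)
      with hT
    let e2 : {f : Quotient s → Fin q // ∀ i : {a : G.V // a ∈ R},
          f (Quotient.mk s i.val) = c i} ≃ ({x : Quotient s // x ∉ T} → Fin q) :=
    { toFun := fun f x => f.val x.val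
      invFun := fun g => ⟨fun x => if hx : x ∈ T then c (Classical.choose hx) else g ⟨x, hx⟩,
        by
          intro i
          have hmem : Quotient.mk s i.val ∈ T := ⟨i, rfl⟩
          dsimp only
          rw [dif_pos hmem]
          have hspec := Classical.choose_spec hmem
          have : G.rootPartition R (S : Set G.E) (Classical.choose hmem) i :=
            (key _ _).1 hspec
          exact (hc _ _).2 (h this)⟩
      left_inv := fun f => by
        apply Subtype.ext; funext x
        dsimp only
        by_cases hx : x ∈ T
        · rw [dif_pos hx]
          have hspec : (Quotient.mk s (Classical.choose hx).val) = x :=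
            Classical.choose_spec hx
          have h3 := f.prop (Classical.choose hx)
          rw [hspec] at h3
          exact h3.symm
        · rw [dif_neg hx]
      right_inv := fun g => by
        funext x
        dsimp only
        rw [dif_neg x.prop] }
    rw [Nat.card_congr e2]
    have hfinD : Finite (Quotient s) := Quotient.finite _
    have hfinT : Finite T := Subtype.finite
    rw [Nat.card_fun, Nat.card_eq_fintype_card (α := Fin q), Fintype.card_fin]
    congr 1
    -- Nat.card {x // x ∉ T} = p - nBlocks
    have hD : Nat.card (Quotient s) = G.p (S : Set G.E) := rfl
    have hTcard : Nat.card T = nBlocks (G.rootPartition R (S : Set G.E)) := by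
      unfold Multigraph.nBlocks
      exact Nat.card_congr (Setoid.comapQuotientEquiv Subtype.val s).symm
    have := Fintype.ofFinite (Quotient s)
    rw [Nat.card_eq_fintype_card]
    have hcompl : Fintype.card {x : Quotient s // x ∉ T}
        = Fintype.card (Quotient s) - Fintype.card {x : Quotient s // x ∈ T} :=
      Fintype.card_subtype_compl _
    rw [hcompl, ← hD, ← hTcard]
    rw [Nat.card_eq_fintype_card, Nat.card_eq_fintype_card]
  · rw [if_neg h]
    rw [Setoid.le_def] at h
    push_neg at h
    obtain ⟨i, j, hij, hnij⟩ := h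
    have : IsEmpty {f : Quotient s → Fin q // ∀ i : {a : G.V // a ∈ R},
        f (Quotient.mk s i.val) = c i} := by
      constructor
      rintro ⟨f, hf⟩
      have h1 : Quotient.mk s i.val = Quotient.mk s j.val := (key i j).2 hij
      have : c i = c j := by rw [← hf i, ← hf j, h1]
      exact hnij ((hc i j).1 this)
    haveI := this
    exact Nat.card_of_isEmpty

open Multigraph in
lemma const_iff (G : Multigraph) (S : Finset G.E) {β : Type} (σ : G.V → β) :
    (∀ e ∈ S, σ (G.ends e).1 = σ (G.ends e).2) ↔
      ∀ a b : G.V, (G.connSetoid (S : Set G.E)) a b → σ a = σ b := by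
  constructor
  · intro h a b hab
    induction hab with
    | rel x y hxy =>
        obtain ⟨e, he, h1 | h1⟩ := hxy
        · have h2 := h e he; rw [h1] at h2; exact h2
        · have h2 := h e he; rw [h1] at h2; exact h2.symm
    | refl x => rfl
    | symm x y _ ih => exact ih.symm
    | trans x y z _ _ ih1 ih2 => exact ih1.trans ih2
  · intro h e he
    exact h _ _ (Relation.EqvGen.rel _ _ ⟨e, he, Or.inl rfl⟩)

instance setoidFinite {α : Type} [Finite α] : Finite (Setoid α) :=
  Finite.of_injective (fun s : Setoid α => ⇑s)
    (fun a b h => Setoid.ext fun x y => iff_of_eq (congrFun (congrFun h x) y))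


/-- `Z_X(G;q,v) = Σ_{Y ⪯ X} F_Y(G;q,v)`. -/
theorem partial_partition_function_decomposition
    (G : Multigraph) (R : Finset G.V) (A : Type) [CommRing A] (q : ℕ) (v : A)
    (hq : R.card ≤ q)
    (X : Setoid {a : G.V // a ∈ R}) (c : {a : G.V // a ∈ R} → Fin q)
    (hc : ∀ i j, c i = c j ↔ X i j) :
    (∑ σ : {σ : G.V → Fin q // ∀ i : {a : G.V // a ∈ R}, σ i.val = c i},
        ∏ e : G.E,
          (1 + v * (if σ.val (G.ends e).1 = σ.val (G.ends e).2 then (1 : A) else 0))) =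
      ∑ᶠ Y ∈ {Y : Setoid {a : G.V // a ∈ R} | Y ≤ X}, G.FF R A q v Y := by
  classical
  -- RHS: finsum to finset sum
  have hfin : ({Y : Setoid {a : G.V // a ∈ R} | Y ≤ X}).Finite := Set.toFinite _
  rw [finsum_mem_eq_finite_toFinset_sum _ hfin]
  -- expand FF and swap sums on RHS
  have rhs_eq : ∑ Y ∈ hfin.toFinset, G.FF R A q v Y =
      ∑ S : Finset G.E,
        (if G.rootPartition R (S : Set G.E) ≤ X then
          v ^ S.card * (q : A) ^ (G.p (S : Set G.E)
            - Multigraph.nBlocks (G.rootPartition R (S : Set G.E))) else 0) := by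
    simp only [Multigraph.FF]
    rw [Finset.sum_comm]
    refine Finset.sum_congr rfl fun S _ => ?_
    rw [Finset.sum_ite_eq hfin.toFinset (G.rootPartition R (S : Set G.E))
      (fun Y => v ^ S.card * (q : A) ^ (G.p (S : Set G.E) - Multigraph.nBlocks Y))]
    simp [Set.Finite.mem_toFinset]
  rw [rhs_eq]
  -- LHS: expand the product
  have expand : ∀ σ : G.V → Fin q,
      (∏ e : G.E, (1 + v * (if σ (G.ends e).1 = σ (G.ends e).2 then (1:A) else 0))) =
      ∑ S : Finset G.E, v ^ S.card *
        (if ∀ a b : G.V, (G.connSetoid (S : Set G.E)) a b → σ a = σ b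
          then (1:A) else 0) := by
    intro σ
    have h1 : ∀ e : G.E,
        (1 + v * (if σ (G.ends e).1 = σ (G.ends e).2 then (1:A) else 0))
        = (if σ (G.ends e).1 = σ (G.ends e).2 then v else 0) + 1 := by
      intro e; by_cases h : σ (G.ends e).1 = σ (G.ends e).2 <;> simp [h, add_comm]
    simp_rw [h1]
    rw [Finset.prod_add, Finset.powerset_univ]
    refine Finset.sum_congr rfl fun S _ => ?_
    rw [Finset.prod_const_one, mul_one]
    have h2 : ∀ e ∈ S, (if σ (G.ends e).1 = σ (G.ends e).2 then v else (0:A))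
        = v * (if σ (G.ends e).1 = σ (G.ends e).2 then (1:A) else 0) := by
      intro e _; by_cases h : σ (G.ends e).1 = σ (G.ends e).2 <;> simp [h]
    rw [Finset.prod_congr rfl h2, Finset.prod_mul_distrib, Finset.prod_const,
      Finset.prod_boole]
    have h3 := propext (const_iff G S σ)
    simp only [h3]
  simp_rw [expand]
  rw [Finset.sum_comm]
  refine Finset.sum_congr rfl fun S _ => ?_
  rw [← Finset.mul_sum, Finset.sum_boole]
  -- relate the count to Nat.card
  have hcount : (Finset.univ.filter
      (fun σ : {σ : G.V → Fin q // ∀ i : {a : G.V // a ∈ R}, σ i.val = c i} =>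
        ∀ a b : G.V, (G.connSetoid (S : Set G.E)) a b → σ.val a = σ.val b)).card =
      Nat.card {σ : {σ : G.V → Fin q // ∀ i : {a : G.V // a ∈ R}, σ i.val = c i} //
        ∀ a b : G.V, (G.connSetoid (S : Set G.E)) a b → σ.val a = σ.val b} := by
    rw [Nat.card_eq_fintype_card, Fintype.card_subtype]
  rw [hcount, count_lemma G R q X c hc S]
  by_cases h : G.rootPartition R (S : Set G.E) ≤ X
  · rw [if_pos h, if_pos h]
    push_cast
    ring
  · rw [if_neg h, if_neg h]
    simp
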